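/- arXiv:math/0306254 — 5 statements merged into one kernel-verified Lean document; each statement's English description precedes it below -/
import Mathlib

section
/- Let A be a commutative F-algebra and W an A-module. The kernel V_W of the Kodaira-Spencer map g: Der_F(A) → Ext^1_A(W,W), where g(δ) is the class of the derivation C(δ) defined by C(δ)(a)(m) = δ(a)m, is an A-submodule of Der_F(A) closed under the Lie bracket of derivations, and hence is a Lie-Rinehart algebra over A. -/
/-!
STATEMENT 2: The kernel `V_W` of the Kodaira-Spencer map
`g : Der_F(A) → Ext^1_A(W,W)`, `g(δ) = [C(δ)]` where `C(δ)(a)(m) = δ(a)m`,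
is an `A`-submodule of `Der_F(A)` closed under the Lie bracket, hence a
Lie-Rinehart algebra over `A` (with the inclusion as anchor).
Here `δ ∈ ker g` is expressed, via `Ext^1_A(W,W) ≅ HH^1(A, Hom_F(W,W))`, as:
`C(δ)` is a Hochschild coboundary, i.e. there is `ρ ∈ End_F(W)` with
`ρ(aw) = aρ(w) + δ(a)w`.
-/
theorem linear_lie_rinehart_algebra (F A W : Type*) [Field F] [CommRing A] [Algebra F A]
    [AddCommGroup W] [Module A W] [Module F W] [IsScalarTower F A W]
    (VW : Set (Derivation F A A))
    (hVW : VW = {δ : Derivation F A A |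
      ∃ ρ : W →ₗ[F] W, ∀ (a : A) (w : W), ρ (a • w) = a • ρ w + δ a • w}) :
    (0 : Derivation F A A) ∈ VW ∧
    (∀ δ ∈ VW, ∀ η ∈ VW, δ + η ∈ VW) ∧
    (∀ (a : A), ∀ δ ∈ VW, a • δ ∈ VW) ∧
    (∀ δ ∈ VW, ∀ η ∈ VW, ⁅δ, η⁆ ∈ VW) := by
  subst hVW
  have hcomm : ∀ (a : A) (c : F) (w : W), a • (c • w) = c • (a • w) := by
    intro a c w
    rw [← IsScalarTower.algebraMap_smul A c w, ← IsScalarTower.algebraMap_smul A c (a • w),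
      smul_smul, smul_smul, mul_comm]
  refine ⟨⟨0, ?_⟩, ?_, ?_, ?_⟩
  · intro a w; simp
  · rintro δ ⟨ρ, hρ⟩ η ⟨σ, hσ⟩
    refine ⟨ρ + σ, fun a w => ?_⟩
    simp only [LinearMap.add_apply, hρ, hσ, Derivation.add_apply, add_smul, smul_add]
    abel
  · rintro a δ ⟨ρ, hρ⟩
    refine ⟨{ toFun := fun w => a • ρ w,
              map_add' := fun x y => by simp,
              map_smul' := fun c w => by simp [hcomm] }, fun b w => ?_⟩
    simp only [LinearMap.coe_mk, AddHom.coe_mk, hρ, smul_add, smul_smul, Derivation.smul_apply, smul_eq_mul]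
    rw [mul_comm b a]
  · rintro δ ⟨ρ, hρ⟩ η ⟨σ, hσ⟩
    refine ⟨ρ ∘ₗ σ - σ ∘ₗ ρ, fun a w => ?_⟩
    simp only [LinearMap.sub_apply, LinearMap.comp_apply, hρ, hσ, map_add, smul_add, smul_smul,
      Derivation.commutator_apply, sub_smul, smul_sub]
    abel
end

section
/- Let A be an F-algebra, W an A-module, and V_W its linear Lie-Rinehart algebra. The class lc(W) ∈ Ext^1_A(V_W, End_A(W)) vanishes if and only if W admits a V_W-connection, i.e. an A-linear map ∇: V_W → End_F(W) with ∇(δ)(aw) = a∇(δ)(w) + δ(a)w for all δ ∈ V_W, a ∈ A, w ∈ W. -/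
/-!
STATEMENT 4: `lc(W) ∈ Ext^1_A(V_W, End_A(W))` vanishes iff `W` admits a
`V_W`-connection.  Via `Ext^1_A(V_W, End_A(W)) ≅ HH^1(A, Hom_F(V_W, End_A(W)))`,
the vanishing of `lc(W)` (the class of `L(a)(δ)(w) = aρ(δ)(w) − ρ(aδ)(w)` for a
chosen Leibniz map `ρ`) means precisely that `L = d^0(η)` for some
`η ∈ Hom_F(V_W, End_A(W))`, where `d^0(η)(a)(δ)(w) = η(aδ)(w) − a·η(δ)(w)`.
-/
theorem lc_vanishes_iff_VW_connection (F A W : Type*) [Field F] [CommRing A] [Algebra F A]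
    [AddCommGroup W] [Module A W] [Module F W] [IsScalarTower F A W]
    -- `V_W`, the linear Lie-Rinehart algebra of `W`, as an `A`-submodule of `Der_F(A)`
    (VW : Submodule A (Derivation F A A))
    (hVW : (VW : Set (Derivation F A A)) = {δ : Derivation F A A |
      ∃ ρ : W →ₗ[F] W, ∀ (a : A) (w : W), ρ (a • w) = a • ρ w + δ a • w})
    -- a chosen `F`-linear map `ρ : V_W → End_F(W)` satisfying the Leibniz rule
    (ρ : VW →ₗ[F] (W →ₗ[F] W))
    (hρ : ∀ (δ : VW) (a : A) (w : W),
      ρ δ (a • w) = a • ρ δ w + (δ : Derivation F A A) a • w) :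
    -- `lc(W) = 0`: the derivation `L` is a Hochschild coboundary `d^0 η`
    (∃ η : VW →ₗ[F] (W →ₗ[A] W),
       ∀ (a : A) (δ : VW) (w : W),
         η (a • δ) w - a • η δ w = a • ρ δ w - ρ (a • δ) w) ↔
    -- `W` has a `V_W`-connection: an `A`-linear map `∇ : V_W → End_F(W)` with Leibniz rule
    (∃ N : VW →ₗ[A] (W →ₗ[F] W),
       ∀ (δ : VW) (a : A) (w : W),
         N δ (a • w) = a • N δ w + (δ : Derivation F A A) a • w) := by

  constructor
  · rintro ⟨η, hη⟩
    refine ⟨⟨⟨fun δ => ρ δ + (η δ).restrictScalars F, ?_⟩, ?_⟩, ?_⟩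
    · intro δ₁ δ₂; ext w; simp; abel
    · intro a δ
      ext w
      have h := hη a δ w
      have h' : η (a • δ) w = (a • ρ δ w - ρ (a • δ) w) + a • η δ w := by
        rw [← h]; abel
      simp only [LinearMap.add_apply, LinearMap.restrictScalars_apply, RingHom.id_apply,
        LinearMap.smul_apply, smul_add, h']
      abel
    · intro δ a w
      simp only [LinearMap.coe_mk, AddHom.coe_mk, LinearMap.add_apply,
        LinearMap.restrictScalars_apply, hρ δ a w, map_smul, smul_add]
      abel
  · rintro ⟨N, hN⟩
    refine ⟨⟨⟨fun δ =>
        ⟨⟨fun w => N δ w - ρ δ w,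
          fun x y => by simp only [map_add]; abel⟩,
          fun a w => by
            simp only [RingHom.id_apply, smul_sub, hN δ a w, hρ δ a w]; abel⟩,
        ?_⟩, ?_⟩, ?_⟩
    · intro δ₁ δ₂; ext w; simp; abel
    · intro c δ; ext w; simp [smul_sub]
    · intro a δ w
      simp only [LinearMap.coe_mk, AddHom.coe_mk, map_smul, LinearMap.smul_apply, smul_sub]
      abel
end

section
/- The class lc(W) ∈ Ext^1_A(V_W, End_A(W)) is independent of the choice of F-linear map ρ: V_W → End_F(W) satisfying the Leibniz rule ρ(δ)(aw) = aρ(δ)(w) + δ(a)w. -/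
/-!
STATEMENT 5: The class `lc(W) ∈ Ext^1_A(V_W, End_A(W))` is independent of the choice of
`F`-linear map `ρ : V_W → End_F(W)` satisfying the Leibniz rule: for two such maps
`ρ, ρ'` the difference `L_ρ − L_{ρ'}` of the associated derivations is a Hochschild
coboundary `d^0(η)` with `η ∈ Hom_F(V_W, End_A(W))`.
-/
theorem lc_independent_of_rho (F A W : Type*) [Field F] [CommRing A] [Algebra F A]
    [AddCommGroup W] [Module A W] [Module F W] [IsScalarTower F A W]
    (VW : Submodule A (Derivation F A A))
    (hVW : (VW : Set (Derivation F A A)) = {δ : Derivation F A A |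
      ∃ ρ : W →ₗ[F] W, ∀ (a : A) (w : W), ρ (a • w) = a • ρ w + δ a • w})
    (ρ ρ' : VW →ₗ[F] (W →ₗ[F] W))
    (hρ : ∀ (δ : VW) (a : A) (w : W),
      ρ δ (a • w) = a • ρ δ w + (δ : Derivation F A A) a • w)
    (hρ' : ∀ (δ : VW) (a : A) (w : W),
      ρ' δ (a • w) = a • ρ' δ w + (δ : Derivation F A A) a • w) :
    ∃ η : VW →ₗ[F] (W →ₗ[A] W),
      ∀ (a : A) (δ : VW) (w : W),
        (a • ρ δ w - ρ (a • δ) w) - (a • ρ' δ w - ρ' (a • δ) w)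
          = η (a • δ) w - a • η δ w := by
  refine ⟨({ toFun := fun δ =>
               { toFun := fun w => ρ' δ w - ρ δ w
                 map_add' := by (intro x y; simp; abel)
                 map_smul' := by
                   (intro a w;
                    simp only [RingHom.id_apply, hρ δ a w, hρ' δ a w, smul_sub];
                    abel) }
             map_add' := by (intro δ₁ δ₂; ext w; simp; abel)
             map_smul' := by (intro c δ; ext w; simp [smul_sub]) }), ?_⟩
  intro a δ w
  show _ = (ρ' (a • δ) w - ρ (a • δ) w) - a • (ρ' δ w - ρ δ w)
  simp only [smul_sub]
  abel
end

section
/- Let F be a field, f = x^m + y^n + z^2 ∈ F[x,y,z], and let φ and ψ be the 4×4 matrices φ = [[x^{m−k}, y^{n−l}, 0, z],[y^l, −x^k, z, 0],[z, 0, −y^{n−l}, −x^k],[0, z, x^{m−k}, −y^l]] and ψ = [[x^k, y^{n−l}, z, 0],[y^l, −x^{m−k}, 0, z],[0, z, −y^l, x^k],[z, 0, −x^{m−k}, −y^{n−l}]] over F[x,y,z], where 1 ≤ k ≤ m and 1 ≤ l ≤ n. Then φψ = ψφ = f·I₄, i.e. (φ,ψ) is a matrix factorization of f. -/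
open MvPolynomial

/-!
STATEMENT 10: The pair `(φ,ψ)` of `4×4` matrices over `F[x,y,z]` is a matrix
factorization of `f = x^m + y^n + z^2`: `φψ = ψφ = f·I₄`.
-/
theorem aux_mf {R : Type*} [CommRing R] (a b c d e : R) :
    !![b, e, 0, c; d, -a, c, 0; c, 0, -e, -a; 0, c, b, -d] *
      !![a, e, c, 0; d, -b, 0, c; 0, c, -d, a; c, 0, -b, -e] =
      (a * b + d * e + c ^ 2) • (1 : Matrix (Fin 4) (Fin 4) R) ∧
    !![a, e, c, 0; d, -b, 0, c; 0, c, -d, a; c, 0, -b, -e] *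
      !![b, e, 0, c; d, -a, c, 0; c, 0, -e, -a; 0, c, b, -d] =
      (a * b + d * e + c ^ 2) • (1 : Matrix (Fin 4) (Fin 4) R) := by
  constructor <;>
  · ext i j
    fin_cases i <;> fin_cases j <;>
      simp [Matrix.mul_apply, Fin.sum_univ_four, Matrix.one_apply] <;> ring

theorem matrix_factorization (F : Type*) [Field F] (m n k l : ℕ)
    (hm : 1 ≤ m) (hn : 1 ≤ n) (hk1 : 1 ≤ k) (hkm : k ≤ m) (hl1 : 1 ≤ l) (hln : l ≤ n) :
    let x : MvPolynomial (Fin 3) F := X 0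
    let y : MvPolynomial (Fin 3) F := X 1
    let z : MvPolynomial (Fin 3) F := X 2
    let f : MvPolynomial (Fin 3) F := x ^ m + y ^ n + z ^ 2
    let φ : Matrix (Fin 4) (Fin 4) (MvPolynomial (Fin 3) F) :=
      !![x ^ (m - k), y ^ (n - l), 0, z;
         y ^ l, -x ^ k, z, 0;
         z, 0, -y ^ (n - l), -x ^ k;
         0, z, x ^ (m - k), -y ^ l]
    let ψ : Matrix (Fin 4) (Fin 4) (MvPolynomial (Fin 3) F) :=
      !![x ^ k, y ^ (n - l), z, 0;
         y ^ l, -x ^ (m - k), 0, z;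
         0, z, -y ^ l, x ^ k;
         z, 0, -x ^ (m - k), -y ^ (n - l)]
    φ * ψ = f • (1 : Matrix (Fin 4) (Fin 4) (MvPolynomial (Fin 3) F)) ∧
      ψ * φ = f • (1 : Matrix (Fin 4) (Fin 4) (MvPolynomial (Fin 3) F)) := by
  intro x y z f φ ψ
  have hx : x ^ k * x ^ (m - k) = x ^ m := by rw [← pow_add]; congr 1; omega
  have hy : y ^ l * y ^ (n - l) = y ^ n := by rw [← pow_add]; congr 1; omega
  have h := aux_mf (x ^ k) (x ^ (m - k)) z (y ^ l) (y ^ (n - l))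
  rw [hx, hy] at h
  exact h
end

section
/- Let g be a Lie-Rinehart algebra over A and W a free A-module of finite rank with a g-connection ∇. Then the function c(δ,η) = trace(R_∇(δ,η)) defines an element of C²(g,A) = Hom_A(Λ²g, A) which is a cocycle: d²(trace ∘ R_∇) = 0, where the differential is taken with respect to the trivial (flat) connection on A given by the anchor. -/
open Finset in
lemma trace_comm_aux {F A W : Type*} [Field F] [CommRing A] [Algebra F A]
    [AddCommGroup W] [Module A W] [Module F W] [IsScalarTower F A W]
    [Module.Free A W] [Module.Finite A W]
    (d : Derivation F A A) (Dd : W →ₗ[F] W)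
    (hDd : ∀ (a : A) (w : W), Dd (a • w) = a • Dd w + d a • w)
    (φ ψ : W →ₗ[A] W) (hψ : ∀ w, ψ w = Dd (φ w) - φ (Dd w)) :
    LinearMap.trace A W ψ = d (LinearMap.trace A W φ) := by
  classical
  let b := Module.Free.chooseBasis A W
  rw [LinearMap.trace_eq_matrix_trace A b ψ, LinearMap.trace_eq_matrix_trace A b φ,
    Matrix.trace, Matrix.trace]
  simp only [Matrix.diag, LinearMap.toMatrix_apply]
  have key : ∀ i, b.repr (ψ (b i)) i
      = (∑ j, b.repr (φ (b i)) j * b.repr (Dd (b j)) i) + d (b.repr (φ (b i)) i)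
        - ∑ j, b.repr (Dd (b i)) j * b.repr (φ (b j)) i := by
    intro i
    rw [hψ, map_sub, Finsupp.sub_apply]
    congr 1
    · conv_lhs => rw [← b.sum_repr (φ (b i)), map_sum]
      simp only [hDd]
      rw [Finset.sum_add_distrib]
      simp only [map_add, map_smul, Finsupp.add_apply, Finsupp.smul_apply, smul_eq_mul,
        map_sum, Finset.sum_apply']
      congr 1
      simp [Module.Basis.repr_self, Finsupp.single_apply, mul_ite]
    · conv_lhs => rw [← b.sum_repr (Dd (b i)), map_sum]
      simp only [map_smul, map_sum, Finsupp.smul_apply, smul_eq_mul, Finset.sum_apply']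
  rw [Finset.sum_congr rfl (fun i _ => key i)]
  rw [Finset.sum_sub_distrib, Finset.sum_add_distrib, ← map_sum d]
  have : (∑ i, ∑ j, b.repr (φ (b i)) j * b.repr (Dd (b j)) i)
      = ∑ i, ∑ j, b.repr (Dd (b i)) j * b.repr (φ (b j)) i := by
    rw [Finset.sum_comm]
    exact Finset.sum_congr rfl fun i _ => Finset.sum_congr rfl fun j _ => mul_comm _ _
  rw [this]
  ring

theorem trace_curvature_cocycle (F A g W : Type*) [Field F] [CommRing A] [Algebra F A]
    [LieRing g] [Module A g] [AddCommGroup W] [Module A W] [Module F W]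
    [IsScalarTower F A W] [Module.Free A W] [Module.Finite A W]
    (α : g →ₗ[A] Derivation F A A)
    (hα : ∀ δ η : g, α ⁅δ, η⁆ = ⁅α δ, α η⁆)
    (hleib : ∀ (δ : g) (a : A) (η : g), ⁅δ, a • η⁆ = a • ⁅δ, η⁆ + α δ a • η)
    (D : g →ₗ[A] (W →ₗ[F] W))
    (hD : ∀ (δ : g) (a : A) (w : W), D δ (a • w) = a • D δ w + α δ a • w)
    -- the curvature, bundled as an `A`-linear endomorphism of `W`
    (R : g → g → (W →ₗ[A] W))
    (hR : ∀ (δ η : g) (w : W), R δ η w = D δ (D η w) - D η (D δ w) - D ⁅δ, η⁆ w)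
    -- `c = trace ∘ R`
    (c : g → g → A)
    (hc : ∀ δ η : g, c δ η = LinearMap.trace A W (R δ η)) :
    -- `c` defines an element of `C²(g,A) = Hom_A(Λ²g,A)`: `A`-bilinear and alternating ...
    (∀ (a : A) (δ δ' η : g), c (a • δ + δ') η = a * c δ η + c δ' η) ∧
    (∀ (a : A) (δ η η' : g), c δ (a • η + η') = a * c δ η + c δ η') ∧
    (∀ δ : g, c δ δ = 0) ∧
    -- ... and `c` is a cocycle: `d²c = 0`
    (∀ g1 g2 g3 : g,
      α g1 (c g2 g3) - α g2 (c g1 g3) + α g3 (c g1 g2)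
        - c ⁅g1, g2⁆ g3 + c ⁅g1, g3⁆ g2 - c ⁅g2, g3⁆ g1 = 0) := by
  -- bracket with a scaled element
  have hsl : ∀ (a : A) (δ η : g), ⁅a • δ, η⁆ = a • ⁅δ, η⁆ - α η a • δ := by
    intro a δ η
    rw [← lie_skew, hleib, ← lie_skew δ η]
    module
  -- A-bilinearity of R in the first argument
  have hbil : ∀ (a : A) (δ δ' η : g), R (a • δ + δ') η = a • R δ η + R δ' η := by
    intro a δ δ' η
    ext w
    have h1 : ⁅a • δ + δ', η⁆ = a • ⁅δ, η⁆ + ⁅δ', η⁆ - α η a • δ := by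
      rw [add_lie, hsl]; module
    simp only [LinearMap.add_apply, LinearMap.smul_apply, hR, h1]
    simp only [map_add, map_smul, map_sub, LinearMap.add_apply, LinearMap.smul_apply,
      LinearMap.sub_apply]
    rw [hD η a (D δ w)]
    module
  -- antisymmetry of R
  have hanti : ∀ δ η : g, R δ η = - R η δ := by
    intro δ η
    ext w
    simp only [LinearMap.neg_apply, hR]
    rw [← lie_skew δ η, map_neg]
    simp only [LinearMap.neg_apply]
    abel
  have hcanti : ∀ δ η : g, c δ η = - c η δ := by
    intro δ η
    rw [hc, hc, hanti δ η, map_neg]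
  have part1 : ∀ (a : A) (δ δ' η : g), c (a • δ + δ') η = a * c δ η + c δ' η := by
    intro a δ δ' η
    rw [hc, hc, hc, hbil, map_add, map_smul, smul_eq_mul]
  refine ⟨part1, ?_, ?_, ?_⟩
  · intro a δ η η'
    rw [hcanti δ (a • η + η'), part1, hcanti η δ, hcanti η' δ]
    ring
  · intro δ
    rw [hc]
    have : R δ δ = 0 := by
      ext w
      simp [hR]
    rw [this, map_zero]
  · intro g1 g2 g3
    -- commutator of D δ with an A-linear φ, as an A-linear map
    have mk : ∀ (δ : g) (φ : W →ₗ[A] W), ∃ ψ : W →ₗ[A] W,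
        ∀ w, ψ w = D δ (φ w) - φ (D δ w) := by
      intro δ φ
      refine ⟨{ toFun := fun w => D δ (φ w) - φ (D δ w)
                map_add' := ?_, map_smul' := ?_ }, fun w => rfl⟩
      · intro x y; simp only [map_add]; abel
      · intro a x
        simp only [map_smul, RingHom.id_apply]
        rw [hD δ a (φ x), hD δ a x, map_add, map_smul, map_smul]
        module
    obtain ⟨ψ1, hψ1⟩ := mk g1 (R g2 g3)
    obtain ⟨ψ2, hψ2⟩ := mk g2 (R g1 g3)
    obtain ⟨ψ3, hψ3⟩ := mk g3 (R g1 g2)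
    have t1 : α g1 (c g2 g3) = LinearMap.trace A W ψ1 := by
      rw [hc, trace_comm_aux (α g1) (D g1) (hD g1) (R g2 g3) ψ1 hψ1]
    have t2 : α g2 (c g1 g3) = LinearMap.trace A W ψ2 := by
      rw [hc, trace_comm_aux (α g2) (D g2) (hD g2) (R g1 g3) ψ2 hψ2]
    have t3 : α g3 (c g1 g2) = LinearMap.trace A W ψ3 := by
      rw [hc, trace_comm_aux (α g3) (D g3) (hD g3) (R g1 g2) ψ3 hψ3]
    have hzero : ψ1 - ψ2 + ψ3 - R ⁅g1, g2⁆ g3 + R ⁅g1, g3⁆ g2 - R ⁅g2, g3⁆ g1 = 0 := by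
      ext w
      have hjac : (⁅⁅g2, g3⁆, g1⁆ : g) = ⁅⁅g1, g3⁆, g2⁆ - ⁅⁅g1, g2⁆, g3⁆ := by
        rw [← lie_skew ⁅g2, g3⁆ g1, ← lie_skew ⁅g1, g3⁆ g2, leibniz_lie g1 g2 g3]
        abel
      simp only [LinearMap.sub_apply, LinearMap.add_apply, LinearMap.zero_apply,
        hψ1, hψ2, hψ3, hR, map_sub, hjac, map_add]
      abel
    rw [t1, t2, t3, hc ⁅g1, g2⁆ g3, hc ⁅g1, g3⁆ g2, hc ⁅g2, g3⁆ g1,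
      ← map_sub, ← map_add, ← map_sub, ← map_add, ← map_sub, hzero, map_zero]
end
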